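/- (Existence of a good partition) Let k ≥ 1, ζ ∈ (0, 1/2], and let (A^j)_{j=0}^{i} be a sequence of partitions of X with: Δ_n(A^0) ≤ Δ_X, Δ_n(A^j) ≤ 2^{-j}Δ_X, level(A^j) ≤ k·j, |A^j| ≤ 2^{level(A^j)}, and Δ_n(A^i) ≤ ζ·Δ_X. Then there exists j₀ ∈ {0,...,i} with Δ_n(A^{j₀}) ≤ 2ζ·Δ_X and |A^{j₀}| ≤ ζ^{-k}. -/
import Mathlib


/-- Key step: if `2^n ≤ 1/ζ` then `size n ≤ ζ^{-k}`. -/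
private lemma size_bound (k : ℕ) (ζ : ℝ) (hζ0 : 0 < ζ)
    (lev size : ℕ → ℕ) (hlev : ∀ j, lev j ≤ k * j) (hsize : ∀ j, size j ≤ 2 ^ lev j)
    (n : ℕ) (hn : (2 : ℝ) ^ n ≤ 1 / ζ) : (size n : ℝ) ≤ ζ ^ (-(k : ℤ)) := by
  have h1 : (size n : ℝ) ≤ (2 : ℝ) ^ lev n := by
    calc (size n : ℝ) ≤ ((2 ^ lev n : ℕ) : ℝ) := by exact_mod_cast hsize n
    _ = (2 : ℝ) ^ lev n := by push_cast; ring
  have h2 : (2 : ℝ) ^ lev n ≤ (2 : ℝ) ^ (k * n) :=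
    pow_le_pow_right₀ (by norm_num) (hlev n)
  have h3 : (2 : ℝ) ^ (k * n) = ((2 : ℝ) ^ n) ^ k := by
    rw [mul_comm, pow_mul]
  have h4 : ((2 : ℝ) ^ n) ^ k ≤ (1 / ζ) ^ k :=
    pow_le_pow_left₀ (by positivity) hn k
  have h5 : (1 / ζ : ℝ) ^ k = ζ ^ (-(k : ℤ)) := by
    rw [zpow_neg, zpow_natCast, one_div, inv_pow]
  linarith [h1, h2, h4, h3 ▸ h4]

/-- Existence of a good partition: given partitions with geometrically decreasing data
diameters, levels growing at rate `k`, sizes at most `2^level`, and final data diameter at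
most `ζ·ΔX`, there is some step `j₀ ≤ i` with data diameter at most `2ζ·ΔX` and size at most
`ζ^{-k}`. -/
theorem exists_good_partition
    (ΔX : ℝ) (hΔX : 0 < ΔX) (k : ℕ) (hk : 1 ≤ k)
    (ζ : ℝ) (hζ0 : 0 < ζ) (hζ1 : ζ ≤ 1 / 2)
    (i : ℕ) (Δn : ℕ → ℝ) (lev size : ℕ → ℕ)
    (hΔ0 : Δn 0 ≤ ΔX)
    (hdec : ∀ j : ℕ, Δn j ≤ (2 : ℝ) ^ (-(j : ℤ)) * ΔX)
    (hlev : ∀ j, lev j ≤ k * j)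
    (hsize : ∀ j, size j ≤ 2 ^ lev j)
    (hfinal : Δn i ≤ ζ * ΔX) :
    ∃ j₀ ≤ i, Δn j₀ ≤ 2 * ζ * ΔX ∧ (size j₀ : ℝ) ≤ ζ ^ (-(k : ℤ)) := by
  classical
  have hζ2 : (0 : ℝ) < 2 * ζ := by positivity
  have hex : ∃ m : ℕ, 1 / (2 * ζ) ≤ (2 : ℝ) ^ m := by
    obtain ⟨m, hm⟩ := pow_unbounded_of_one_lt (1 / (2 * ζ)) (by norm_num : (1 : ℝ) < 2)
    exact ⟨m, hm.le⟩
  set m := Nat.find hex with hmdef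
  have hm : 1 / (2 * ζ) ≤ (2 : ℝ) ^ m := Nat.find_spec hex
  by_cases hmi : m ≤ i
  · -- use j₀ = m
    refine ⟨m, hmi, ?_, ?_⟩
    · have h2m : (2 : ℝ) ^ (-(m : ℤ)) ≤ 2 * ζ := by
        have hp : (0 : ℝ) < 2 ^ m := pow_pos two_pos m
        have hinv : (2 : ℝ) ^ m * ((2 : ℝ) ^ m)⁻¹ = 1 := mul_inv_cancel₀ hp.ne'
        have hm' : 1 ≤ (2 : ℝ) ^ m * (2 * ζ) := by
          rw [div_le_iff₀ hζ2] at hm; linarith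
        rw [zpow_neg, zpow_natCast]
        nlinarith [inv_nonneg.mpr hp.le]
      calc Δn m ≤ (2 : ℝ) ^ (-(m : ℤ)) * ΔX := hdec m
        _ ≤ 2 * ζ * ΔX := by nlinarith
    · apply size_bound k ζ hζ0 lev size hlev hsize
      rcases Nat.eq_zero_or_pos m with h0 | hpos
      · rw [h0, pow_zero, le_div_iff₀ hζ0, one_mul]; linarith
      · have hlt := Nat.find_min hex (show m - 1 < m from Nat.sub_lt hpos one_pos)
        push_neg at hlt
        have : (2 : ℝ) ^ (m - 1) < 1 / (2 * ζ) := hlt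
        have hm1 : m = (m - 1) + 1 := (Nat.succ_pred_eq_of_pos hpos).symm
        rw [hm1, pow_succ]
        rw [lt_div_iff₀ hζ2] at this
        rw [le_div_iff₀ hζ0]
        nlinarith
  · -- use j₀ = i
    push_neg at hmi
    refine ⟨i, le_refl i, by nlinarith, ?_⟩
    apply size_bound k ζ hζ0 lev size hlev hsize
    have hlt := Nat.find_min hex hmi
    push_neg at hlt
    have : (2 : ℝ) ^ i < 1 / (2 * ζ) := hlt
    rw [lt_div_iff₀ hζ2] at this
    rw [le_div_iff₀ hζ0]
    nlinarith [pow_pos (show (0:ℝ) < 2 by norm_num) i]
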